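/- arXiv:2602.23145 — 5 statements merged into one kernel-verified Lean document; each statement's English description precedes it below -/
import Mathlib

section
/- Let x : [0,∞) → ℝ^d be continuous and let S be a nonempty subset of ℝ^d. Suppose that for every x* ∈ S the limit lim_{t→∞} ‖x(t) - x*‖ exists, and that every cluster point of the integral average t ↦ (1/t)∫₀ᵗ x(s) ds (as t → ∞) belongs to S. Then there exists x* ∈ S such that (1/t)∫₀ᵗ x(s) ds → x* as t → ∞. -/
/-!
Write `⟨x⟩_t = t⁻¹ • ∫ s in 0..t, x s` (called the average below). Since `‖x t - p‖ → L` for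
some `p ∈ S`, the averages satisfy `‖⟨x⟩_t - p‖ ≤ ⟨‖x - p‖⟩_t → L`, so they stay in a compact
ball and have a cluster point. For `p, q ∈ S` the polarization identity writes `⟪q - p, x t⟫` as
an affine combination of `‖x t - p‖²` and `‖x t - q‖²`, so it converges, and by the continuous
Cesàro lemma so does `⟪q - p, ⟨x⟩_t⟫`. Two cluster points `p, q` (both in `S`) therefore satisfy
`⟪q - p, p⟫ = ⟪q - p, q⟫`, i.e. `p = q`; a bounded function with a unique cluster point converges.
-/

open Filter MeasureTheory Set Asymptotics
open scoped Topology RealInnerProductSpace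

theorem ContinuousOn.intervalIntegrable_of_Ici {E : Type*} [NormedAddCommGroup E] {f : ℝ → E}
    (hf : ContinuousOn f (Ici 0)) {t : ℝ} (ht : 0 ≤ t) : IntervalIntegrable f volume 0 t :=
  (hf.mono (uIcc_of_le ht ▸ Icc_subset_Ici_self)).intervalIntegrable

section Average

variable {E : Type*} [NormedAddCommGroup E] [NormedSpace ℝ E] {f : ℝ → E}

theorem average_sub_const [CompleteSpace E] {t : ℝ} (ht : t ≠ 0)
    (hf : IntervalIntegrable f volume 0 t) (c : E) :
    t⁻¹ • ∫ s in (0:ℝ)..t, (f s - c) = t⁻¹ • (∫ s in (0:ℝ)..t, f s) - c := by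
  rw [intervalIntegral.integral_sub hf intervalIntegrable_const, intervalIntegral.integral_const,
    sub_zero, smul_sub, smul_smul, inv_mul_cancel₀ ht, one_smul]

theorem isLittleO_integral_of_tendsto_zero (hf : ∀ t ≥ 0, IntervalIntegrable f volume 0 t)
    (h : Tendsto f atTop (𝓝 0)) : (fun t => ∫ s in (0:ℝ)..t, f s) =o[atTop] id := by
  refine isLittleO_iff.2 fun ε hε => ?_
  obtain ⟨T, hT⟩ := eventually_atTop.1 <|
    (tendsto_zero_iff_norm_tendsto_zero.1 h).eventually (eventually_le_nhds (half_pos hε))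
  set T' := max T 0
  have hhead : (fun _ : ℝ => ∫ s in (0:ℝ)..T', f s) =o[atTop] id :=
    isLittleO_const_left.2 <| Or.inr <| tendsto_norm_atTop_atTop.comp tendsto_id
  filter_upwards [isLittleO_iff.1 hhead (half_pos hε), eventually_ge_atTop T'] with t hhead_t htT
  have hT'0 : 0 ≤ T' := le_max_right _ _
  have htail : ‖∫ s in T'..t, f s‖ ≤ ε / 2 * |t - T'| :=
    intervalIntegral.norm_integral_le_of_norm_le_const fun s hs =>
      hT s (le_trans (le_max_left _ _) (by rw [uIoc_of_le htT] at hs; exact hs.1.le))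
  have ht0 : 0 ≤ t := hT'0.trans htT
  calc ‖∫ s in (0:ℝ)..t, f s‖
      = ‖(∫ s in (0:ℝ)..T', f s) + ∫ s in T'..t, f s‖ := by
        rw [intervalIntegral.integral_add_adjacent_intervals (hf T' hT'0)
          ((hf T' hT'0).symm.trans (hf t ht0))]
    _ ≤ ε / 2 * ‖id t‖ + ε / 2 * |t - T'| := (norm_add_le _ _).trans (add_le_add hhead_t htail)
    _ ≤ ε * ‖id t‖ := by
        rw [id, Real.norm_eq_abs, abs_of_nonneg ht0, abs_of_nonneg (sub_nonneg.2 htT)]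
        nlinarith

theorem tendsto_average_of_tendsto [CompleteSpace E] {c : E}
    (hf : ∀ t ≥ 0, IntervalIntegrable f volume 0 t) (h : Tendsto f atTop (𝓝 c)) :
    Tendsto (fun t => t⁻¹ • ∫ s in (0:ℝ)..t, f s) atTop (𝓝 c) := by
  have hsub : ∀ t ≥ 0, IntervalIntegrable (fun s => f s - c) volume 0 t :=
    fun t ht => (hf t ht).sub intervalIntegrable_const
  have hsmall := isLittleO_integral_of_tendsto_zero hsub (tendsto_sub_nhds_zero_iff.2 h)
  have hzero : Tendsto (fun t => t⁻¹ • ∫ s in (0:ℝ)..t, (f s - c)) atTop (𝓝 0) := by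
    refine tendsto_zero_iff_norm_tendsto_zero.2 ?_
    refine hsmall.norm_left.tendsto_div_nhds_zero.congr' ?_
    filter_upwards [eventually_gt_atTop 0] with t ht
    rw [norm_smul, norm_inv, Real.norm_eq_abs, abs_of_pos ht, id, inv_mul_eq_div]
  refine tendsto_sub_nhds_zero_iff.1 (hzero.congr' ?_)
  filter_upwards [eventually_gt_atTop 0] with t ht
  exact average_sub_const ht.ne' (hf t ht.le) c

theorem eventually_norm_average_sub_le [CompleteSpace E] {p : E} {L L' : ℝ}
    (hf : ∀ t ≥ 0, IntervalIntegrable f volume 0 t) (h : Tendsto (fun t => ‖f t - p‖) atTop (𝓝 L))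
    (hL : L < L') : ∀ᶠ t in atTop, ‖t⁻¹ • (∫ s in (0:ℝ)..t, f s) - p‖ ≤ L' := by
  have hsub : ∀ t ≥ 0, IntervalIntegrable (fun s => f s - p) volume 0 t :=
    fun t ht => (hf t ht).sub intervalIntegrable_const
  have hnorm := tendsto_average_of_tendsto (fun t ht => (hsub t ht).norm) h
  filter_upwards [hnorm.eventually (eventually_le_nhds hL), eventually_gt_atTop 0] with t hle ht
  calc ‖t⁻¹ • (∫ s in (0:ℝ)..t, f s) - p‖ = t⁻¹ * ‖∫ s in (0:ℝ)..t, (f s - p)‖ := by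
        rw [← average_sub_const ht.ne' (hf t ht.le), norm_smul, norm_inv, Real.norm_eq_abs,
          abs_of_pos ht]
    _ ≤ t⁻¹ * ∫ s in (0:ℝ)..t, ‖f s - p‖ := by
        gcongr; exact intervalIntegral.norm_integral_le_integral_norm ht.le
    _ ≤ L' := hle

end Average

section Inner

variable {E : Type*} [NormedAddCommGroup E] [InnerProductSpace ℝ E]

theorem inner_sub_left_eq_norm_sub_sq (p q y : E) :
    ⟪q - p, y⟫ = (‖y - p‖ ^ 2 - ‖y - q‖ ^ 2 + ‖q‖ ^ 2 - ‖p‖ ^ 2) / 2 := by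
  rw [norm_sub_sq_real, norm_sub_sq_real, inner_sub_left, real_inner_comm p, real_inner_comm q]
  ring

theorem Filter.Tendsto.inner_sub_of_tendsto_norm_sub {α : Type*} {l : Filter α} {u : α → E}
    {p q : E} {Lp Lq : ℝ} (hp : Tendsto (fun t => ‖u t - p‖) l (𝓝 Lp))
    (hq : Tendsto (fun t => ‖u t - q‖) l (𝓝 Lq)) :
    Tendsto (fun t => ⟪q - p, u t⟫) l (𝓝 ((Lp ^ 2 - Lq ^ 2 + ‖q‖ ^ 2 - ‖p‖ ^ 2) / 2)) := by
  simp only [inner_sub_left_eq_norm_sub_sq]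
  exact ((((hp.pow 2).sub (hq.pow 2)).add_const _).sub_const _).div_const 2

theorem inner_average_comm [CompleteSpace E] {f : ℝ → E} {t : ℝ}
    (hf : IntervalIntegrable f volume 0 t) (v : E) :
    ⟪v, t⁻¹ • ∫ s in (0:ℝ)..t, f s⟫ = t⁻¹ * ∫ s in (0:ℝ)..t, ⟪v, f s⟫ := by
  rw [real_inner_smul_right]
  exact congrArg _ ((innerSL ℝ v).intervalIntegral_comp_comm hf).symm

theorem eq_of_mapClusterPt_of_tendsto_inner {α : Type*} {l : Filter α} {u : α → E} {p q : E}
    {c : ℝ} (hp : MapClusterPt p l u) (hq : MapClusterPt q l u)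
    (h : Tendsto (fun t => ⟪q - p, u t⟫) l (𝓝 c)) : p = q := by
  have hlim : ∀ z, MapClusterPt z l u → ⟪q - p, z⟫ = c := fun z hz =>
    eq_of_nhds_neBot <| ((continuous_const.inner continuous_id).continuousAt.mapClusterPt hz
      |>.clusterPt).mono h
  have hzero : ⟪q - p, q - p⟫ = 0 := by rw [inner_sub_right, hlim q hq, hlim p hp, sub_self]
  exact (sub_eq_zero.1 (inner_self_eq_zero.1 hzero)).symm

theorem exists_tendsto_of_tendsto_inner_sub [ProperSpace E] {α : Type*} {l : Filter α} [NeBot l]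
    {u : α → E} {S : Set E} {p₀ : E} {R : ℝ} (hbdd : ∀ᶠ t in l, ‖u t - p₀‖ ≤ R)
    (hclu : ∀ p, MapClusterPt p l u → p ∈ S)
    (hinner : ∀ p ∈ S, ∀ q ∈ S, ∃ c, Tendsto (fun t => ⟪q - p, u t⟫) l (𝓝 c)) :
    ∃ p ∈ S, Tendsto u l (𝓝 p) := by
  have hmem : ∀ᶠ t in l, u t ∈ Metric.closedBall p₀ R := by simpa [dist_eq_norm] using hbdd
  obtain ⟨p, -, hp⟩ := (isCompact_closedBall p₀ R).exists_mapClusterPt (le_principal_iff.2 hmem)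
  refine ⟨p, hclu p hp, (isCompact_closedBall p₀ R).tendsto_nhds_of_unique_mapClusterPt hmem
    fun q _ hq => ?_⟩
  obtain ⟨c, hc⟩ := hinner p (hclu p hp) q (hclu q hq)
  exact (eq_of_mapClusterPt_of_tendsto_inner hp hq hc).symm

end Inner

/-- Opial-type lemma for the integral average. -/
theorem stmt_2 (d : ℕ) (x : ℝ → EuclideanSpace ℝ (Fin d))
    (S : Set (EuclideanSpace ℝ (Fin d)))
    (hx : ContinuousOn x (Set.Ici 0)) (hS : S.Nonempty)
    (hlim : ∀ p ∈ S, ∃ L : ℝ, Tendsto (fun t => ‖x t - p‖) atTop (nhds L))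
    (hclu : ∀ p, MapClusterPt p atTop
        (fun t : ℝ => (1 / t) • ∫ s in (0:ℝ)..t, x s) → p ∈ S) :
    ∃ p ∈ S, Tendsto (fun t : ℝ => (1 / t) • ∫ s in (0:ℝ)..t, x s)
      atTop (nhds p) := by
  simp only [one_div] at hclu ⊢
  obtain ⟨p₀, hp₀⟩ := hS
  obtain ⟨L₀, hL₀⟩ := hlim p₀ hp₀
  have hbdd := eventually_norm_average_sub_le (fun t => hx.intervalIntegrable_of_Ici) hL₀
    (lt_add_one L₀)
  refine exists_tendsto_of_tendsto_inner_sub hbdd hclu fun p hp q hq => ?_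
  obtain ⟨Lp, hLp⟩ := hlim p hp
  obtain ⟨Lq, hLq⟩ := hlim q hq
  refine ⟨_, (tendsto_average_of_tendsto
    (fun t => (continuousOn_const.inner hx).intervalIntegrable_of_Ici)
    (hLp.inner_sub_of_tendsto_norm_sub hLq)).congr' ?_⟩
  filter_upwards [eventually_ge_atTop 0] with t ht
  exact (inner_average_comm (hx.intervalIntegrable_of_Ici ht) (q - p)).symm
end

section
/- Let t₀ ≥ 0, T > t₀, and let ψ : [t₀,T] → [0,∞) be lower semicontinuous. Suppose ℓ : [0,∞) → [0,∞) is continuous, β is locally integrable, and for all t₀ ≤ s < t ≤ T one has ψ(t) ≤ ψ(s) - ∫ₛᵗ ℓ(τ)ψ(τ) dτ + ∫ₛᵗ β(τ) dτ. Then for all t ∈ [t₀,T], ψ(t) ≤ exp(-∫_{t₀}^t ℓ(s) ds)[ψ(t₀) + ∫_{t₀}^t exp(∫_{t₀}^s ℓ(τ) dτ) β(s) ds]. -/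
/-!
Write `ψ = D + Φ` with `Φ t = ∫_{t₀}^t (β - ℓ ψ)`; the hypothesis says exactly that `D` is
nonincreasing. Let `E = exp ∫_{t₀} ℓ`, so `E' = ℓ E ≥ 0` and `E t₀ = 1`. Since `Φ` is absolutely
continuous, the product rule gives `E t * Φ t = ∫ (E' Φ + E (β - ℓ ψ))`, while monotonicity of `D`
gives the Stieltjes-type inequality `E t * D t - D t₀ ≤ ∫ E' D`. Adding them, the `ℓ ψ` terms
cancel and `E t * ψ t ≤ ψ t₀ + ∫ E β`. Everything needs `ψ` integrable: lower semicontinuity gives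
measurability, and the hypothesis with `s = t₀` bounds `ψ` by `ψ t₀ + ∫ |β|`.
-/

open MeasureTheory intervalIntegral Set

theorem LowerSemicontinuousOn.aemeasurable_restrict {α β : Type*} [TopologicalSpace α]
    [MeasurableSpace α] [OpensMeasurableSpace α] [TopologicalSpace β] [MeasurableSpace β]
    [BorelSpace β] [LinearOrder β] [OrderTopology β] [SecondCountableTopology β]
    {μ : Measure α} {f : α → β} {s : Set α} (hs : MeasurableSet s)
    (hf : LowerSemicontinuousOn f s) : AEMeasurable f (μ.restrict s) :=
  (aemeasurable_restrict_iff_comap_subtype hs).2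
    (lowerSemicontinuous_restrict_iff.2 hf).measurable.aemeasurable

theorem LowerSemicontinuousOn.integrableOn_of_nonneg_of_le {α : Type*} [TopologicalSpace α]
    [MeasurableSpace α] [OpensMeasurableSpace α] {μ : Measure α} {f : α → ℝ} {s : Set α}
    {M : ℝ} (hs : MeasurableSet s) (hμs : μ s < ⊤) (hf : LowerSemicontinuousOn f s)
    (hf₀ : ∀ x ∈ s, 0 ≤ f x) (hfM : ∀ x ∈ s, f x ≤ M) : IntegrableOn f s μ := by
  refine .of_bound hμs (hf.aemeasurable_restrict hs).aestronglyMeasurable M ?_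
  filter_upwards [ae_restrict_mem hs] with x hx
  rw [Real.norm_of_nonneg (hf₀ x hx)]
  exact hfM x hx

theorem le_add_integral_abs_of_le_sub_integral {ψ ℓ β : ℝ → ℝ} {a b : ℝ}
    (hψ₀ : ∀ x ∈ Icc a b, 0 ≤ ψ x) (hℓ₀ : ∀ x ∈ Icc a b, 0 ≤ ℓ x)
    (hβ : IntegrableOn β (Icc a b))
    (h : ∀ t, a < t → t ≤ b → ψ t ≤ ψ a - (∫ τ in a..t, ℓ τ * ψ τ) + ∫ τ in a..t, β τ) :
    ∀ x ∈ Icc a b, ψ x ≤ ψ a + ∫ τ in a..b, |β τ| := by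
  intro x hx
  have hψx : ψ x ≤ ψ a - (∫ τ in a..x, ℓ τ * ψ τ) + ∫ τ in a..x, β τ := by
    rcases hx.1.eq_or_lt with rfl | hax
    · simp
    · exact h x hax hx.2
  have hdiss : 0 ≤ ∫ τ in a..x, ℓ τ * ψ τ :=
    integral_nonneg hx.1 fun τ hτ ↦
      mul_nonneg (hℓ₀ τ ⟨hτ.1, hτ.2.trans hx.2⟩) (hψ₀ τ ⟨hτ.1, hτ.2.trans hx.2⟩)
  have hsource : ∫ τ in a..x, β τ ≤ ∫ τ in a..b, |β τ| :=
    calc ∫ τ in a..x, β τ ≤ ∫ τ in a..x, |β τ| :=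
          (le_abs_self _).trans (abs_integral_le_integral_abs hx.1)
      _ ≤ ∫ τ in a..b, |β τ| := integral_mono_interval le_rfl hx.1 hx.2
            (ae_of_all _ fun _ ↦ abs_nonneg _)
            ((intervalIntegrable_iff_integrableOn_Icc_of_le (hx.1.trans hx.2)).2 hβ).abs
  linarith

theorem antitoneOn_sub_integral_of_le_add_integral {ψ g : ℝ → ℝ} {a b : ℝ}
    (hg : IntegrableOn g (Icc a b))
    (h : ∀ s t, a ≤ s → s < t → t ≤ b → ψ t ≤ ψ s + ∫ τ in s..t, g τ) :
    AntitoneOn (fun x ↦ ψ x - ∫ τ in a..x, g τ) (Icc a b) := by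
  intro s hs t ht hst
  rcases hst.eq_or_lt with rfl | hst
  · rfl
  have hint : ∀ x ∈ Icc a b, IntervalIntegrable g volume a x := fun x hx ↦
    (hg.mono_set (uIcc_subset_Icc (left_mem_Icc.2 (hx.1.trans hx.2)) hx)).intervalIntegrable
  have := integral_interval_sub_left (hint t ht) (hint s hs)
  linarith [h s t hs.1 hst ht.2]

theorem AntitoneOn.mul_sub_mul_le_integral_deriv_mul {D E E' : ℝ → ℝ} {a b : ℝ} (hab : a ≤ b)
    (hD : AntitoneOn D (Icc a b)) (hE : ∀ x ∈ Icc a b, HasDerivAt E (E' x) x)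
    (hE' : ContinuousOn E' (Icc a b)) (hE'₀ : ∀ x ∈ Icc a b, 0 ≤ E' x) (hEa : 0 ≤ E a) :
    E b * D b - E a * D a ≤ ∫ x in a..b, E' x * D x := by
  have hb : b ∈ Icc a b := right_mem_Icc.2 hab
  have hDb : D b ≤ D a := hD (left_mem_Icc.2 hab) hb hab
  rw [← uIcc_of_le hab] at hE hE'
  have hE'int : IntervalIntegrable E' volume a b := hE'.intervalIntegrable
  have hDint : IntervalIntegrable D volume a b := (uIcc_of_le hab ▸ hD).intervalIntegrable
  calc E b * D b - E a * D a ≤ (E b - E a) * D b := by nlinarith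
    _ = ∫ x in a..b, E' x * D b := by
      rw [intervalIntegral.integral_mul_const, integral_eq_sub_of_hasDerivAt hE hE'int]
    _ ≤ ∫ x in a..b, E' x * D x :=
      integral_mono_on hab (hE'int.mul_const _) (hDint.continuousOn_mul hE') fun x hx ↦
        mul_le_mul_of_nonneg_left (hD hx hb hx.2) (hE'₀ x hx)

theorem integral_deriv_mul_add_mul_eq_mul_integral {E E' g : ℝ → ℝ} {a b : ℝ}
    (hE : ∀ x, HasDerivAt E (E' x) x) (hE' : Continuous E')
    (hg : IntervalIntegrable g volume a b) :
    ∫ x in a..b, (E' x * (∫ τ in a..x, g τ) + E x * g x) = E b * ∫ τ in a..b, g τ := by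
  have hderiv : deriv E = E' := funext fun x ↦ (hE x).deriv
  have hEac : AbsolutelyContinuousOnInterval E a b :=
    (contDiff_one_iff_deriv.2 ⟨fun x ↦ (hE x).differentiableAt, hderiv ▸ hE'⟩).contDiffOn
      |>.absolutelyContinuousOnInterval
  have hprod := hEac.integral_deriv_mul_eq_sub
    (hg.absolutelyContinuousOnInterval_intervalIntegral left_mem_uIcc)
  rw [integral_same, mul_zero, sub_zero] at hprod
  rw [← hprod]
  refine integral_congr_ae ?_
  filter_upwards [hg.ae_hasDerivAt_integral] with x hx hxI
  rw [hderiv, (hx (uIoc_subset_uIcc hxI) a left_mem_uIcc).deriv]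

theorem exp_integral_mul_le_of_antitoneOn {ψ ℓ β : ℝ → ℝ} {a b : ℝ} (hab : a ≤ b)
    (hℓ : Continuous ℓ) (hℓ₀ : ∀ x ∈ Icc a b, 0 ≤ ℓ x) (hψ : IntegrableOn ψ (Icc a b))
    (hβ : IntegrableOn β (Icc a b))
    (hD : AntitoneOn (fun x ↦ ψ x - ∫ τ in a..x, (β τ - ℓ τ * ψ τ)) (Icc a b)) :
    Real.exp (∫ x in a..b, ℓ x) * ψ b ≤ ψ a + ∫ x in a..b, Real.exp (∫ τ in a..x, ℓ τ) * β x := by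
  set E := fun x ↦ Real.exp (∫ τ in a..x, ℓ τ)
  set Φ := fun x ↦ ∫ τ in a..x, (β τ - ℓ τ * ψ τ)
  set D := fun x ↦ ψ x - Φ x
  have hE : ∀ x, HasDerivAt E (ℓ x * E x) x := fun x ↦ by
    simpa [E, mul_comm] using (hℓ.integral_hasStrictDerivAt a x).hasDerivAt.exp
  have hE' : Continuous fun x ↦ ℓ x * E x :=
    hℓ.mul (continuous_iff_continuousAt.2 fun x ↦ (hE x).continuousAt)
  rw [← uIcc_of_le hab] at hψ hβ
  have hg : IntegrableOn (fun τ ↦ β τ - ℓ τ * ψ τ) (uIcc a b) :=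
    hβ.sub (hψ.continuousOn_mul hℓ.continuousOn isCompact_uIcc)
  have hcancel : ∫ x in a..b, ℓ x * E x * D x + (ℓ x * E x * Φ x + E x * (β x - ℓ x * ψ x))
      = ∫ x in a..b, E x * β x :=
    integral_congr fun x _ ↦ by simp only [D]; ring
  have hDint : IntervalIntegrable (fun x ↦ ℓ x * E x * D x) volume a b :=
    (uIcc_of_le hab ▸ hD).intervalIntegrable.continuousOn_mul hE'.continuousOn
  have hΦint :
      IntervalIntegrable (fun x ↦ ℓ x * E x * Φ x + E x * (β x - ℓ x * ψ x)) volume a b :=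
    ((continuousOn_primitive_interval hg).intervalIntegrable.continuousOn_mul hE'.continuousOn).add
      (hg.intervalIntegrable.continuousOn_mul (by fun_prop))
  have hanti := hD.mul_sub_mul_le_integral_deriv_mul hab (fun x _ ↦ hE x) hE'.continuousOn
    (fun x hx ↦ mul_nonneg (hℓ₀ x hx) (Real.exp_pos _).le) (Real.exp_pos _).le
  have hprod := integral_deriv_mul_add_mul_eq_mul_integral hE hE' hg.intervalIntegrable
  rw [← hcancel, integral_add hDint hΦint, hprod]
  simp only [E, integral_same, Real.exp_zero, one_mul, D, Φ, sub_zero] at hanti ⊢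
  linarith

theorem stmt_5_general (t₀ T : ℝ) (ht₀ : 0 ≤ t₀)
    (ψ : ℝ → ℝ) (hψlsc : LowerSemicontinuousOn ψ (Set.Icc t₀ T))
    (hψnn : ∀ t ∈ Set.Icc t₀ T, 0 ≤ ψ t)
    (ℓ : ℝ → ℝ) (hℓcont : Continuous ℓ) (hℓnn : ∀ t, 0 ≤ t → 0 ≤ ℓ t)
    (β : ℝ → ℝ) (hβ : LocallyIntegrable β volume)
    (hineq : ∀ s t, t₀ ≤ s → s < t → t ≤ T →
      ψ t ≤ ψ s - (∫ τ in s..t, ℓ τ * ψ τ) + ∫ τ in s..t, β τ) :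
    ∀ t ∈ Set.Icc t₀ T,
      ψ t ≤ Real.exp (-(∫ s in t₀..t, ℓ s)) *
        (ψ t₀ + ∫ s in t₀..t, Real.exp (∫ τ in t₀..s, ℓ τ) * β s) := by
  intro t ht
  have hβ' : IntegrableOn β (Icc t₀ T) := hβ.integrableOn_isCompact isCompact_Icc
  have hℓ₀ : ∀ x ∈ Icc t₀ T, 0 ≤ ℓ x := fun x hx ↦ hℓnn x (ht₀.trans hx.1)
  have hψ : IntegrableOn ψ (Icc t₀ T) :=
    hψlsc.integrableOn_of_nonneg_of_le measurableSet_Icc measure_Icc_lt_top hψnn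
      (le_add_integral_abs_of_le_sub_integral hψnn hℓ₀ hβ' (hineq t₀ · le_rfl))
  have hℓψ : IntegrableOn (fun τ ↦ ℓ τ * ψ τ) (Icc t₀ T) :=
    hψ.continuousOn_mul hℓcont.continuousOn isCompact_Icc
  have hD : AntitoneOn (fun x ↦ ψ x - ∫ τ in t₀..x, (β τ - ℓ τ * ψ τ)) (Icc t₀ T) :=
    antitoneOn_sub_integral_of_le_add_integral (hβ'.sub hℓψ) fun s u hs hsu hu ↦ by
      have hsub : uIcc s u ⊆ Icc t₀ T :=
        uIcc_subset_Icc ⟨hs, hsu.le.trans hu⟩ ⟨hs.trans hsu.le, hu⟩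
      rw [integral_sub (hβ'.mono_set hsub).intervalIntegrable
        (hℓψ.mono_set hsub).intervalIntegrable]
      linarith [hineq s u hs hsu hu]
  have hsub : Icc t₀ t ⊆ Icc t₀ T := Icc_subset_Icc_right ht.2
  rw [Real.exp_neg, le_inv_mul_iff₀ (Real.exp_pos _)]
  exact exp_integral_mul_le_of_antitoneOn ht.1 hℓcont (fun x hx ↦ hℓ₀ x (hsub hx))
    (hψ.mono_set hsub) (hβ'.mono_set hsub) (hD.mono hsub)

/-- Gronwall-type comparison lemma for a lower semicontinuous
nonnegative function satisfying an integral dissipation inequality. -/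
theorem stmt_5 (t₀ T : ℝ) (ht₀ : 0 ≤ t₀) (hT : t₀ < T)
    (ψ : ℝ → ℝ) (hψlsc : LowerSemicontinuousOn ψ (Set.Icc t₀ T))
    (hψnn : ∀ t ∈ Set.Icc t₀ T, 0 ≤ ψ t)
    (ℓ : ℝ → ℝ) (hℓcont : Continuous ℓ) (hℓnn : ∀ t, 0 ≤ t → 0 ≤ ℓ t)
    (β : ℝ → ℝ) (hβ : LocallyIntegrable β volume)
    (hineq : ∀ s t, t₀ ≤ s → s < t → t ≤ T →
      ψ t ≤ ψ s - (∫ τ in s..t, ℓ τ * ψ τ) + ∫ τ in s..t, β τ) :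
    ∀ t ∈ Set.Icc t₀ T,
      ψ t ≤ Real.exp (-(∫ s in t₀..t, ℓ s)) *
        (ψ t₀ + ∫ s in t₀..t, Real.exp (∫ τ in t₀..s, ℓ τ) * β s) :=
  stmt_5_general t₀ T ht₀ ψ hψlsc hψnn ℓ hℓcont hℓnn β hβ hineq
end

section
/- Let A : ℝ^d ⇉ ℝ^d be maximal monotone, and let x, y : [0,∞) → ℝ^d be absolutely continuous curves satisfying x'(t) ∈ -A(x(t)) - ε(t)x(t) and y'(t) ∈ -A(y(t)) - ε(t)y(t) for a.e. t, where ε : [0,∞) → [0,∞) is measurable and locally integrable. Then for all 0 ≤ s ≤ t, ‖x(t) - y(t)‖ ≤ exp(-∫ₛᵗ ε(τ)dτ) ‖x(s) - y(s)‖. -/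
/-!
For `z = x - y`, monotonicity of `A` gives `⟪z', z⟫ + ε ‖z‖² ≤ 0` almost everywhere. Hence
`φ = exp (2 ∫ₛ ε) ‖z‖²` is absolutely continuous with a.e. nonpositive derivative, and the
fundamental theorem of calculus for absolutely continuous functions makes it nonincreasing:
`φ t ≤ φ s`, which is the squared estimate.
-/

open MeasureTheory

/-- A set-valued operator is monotone. -/
def IsMonotoneOp {E : Type*} [NormedAddCommGroup E] [InnerProductSpace ℝ E]
    (A : E → Set E) : Prop :=
  ∀ ⦃x u y v⦄, u ∈ A x → v ∈ A y → 0 ≤ (inner ℝ (u - v) (x - y) : ℝ)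

/-- A set-valued operator is maximal monotone. -/
def IsMaximalMonotoneOp {E : Type*} [NormedAddCommGroup E] [InnerProductSpace ℝ E]
    (A : E → Set E) : Prop :=
  IsMonotoneOp A ∧
    ∀ x u, (∀ y v, v ∈ A y → 0 ≤ (inner ℝ (u - v) (x - y) : ℝ)) → u ∈ A x

open Set Filter Topology

theorem MeasureTheory.LocallyIntegrable.intervalIntegrable {E : Type*} [NormedAddCommGroup E]
    {f : ℝ → E} {μ : Measure ℝ} [IsLocallyFiniteMeasure μ] (hf : LocallyIntegrable f μ)
    (a b : ℝ) : IntervalIntegrable f μ a b :=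
  (hf.integrableOn_isCompact isCompact_uIcc).intervalIntegrable

theorem eq_add_intervalIntegral_of_eq_add_intervalIntegral {E : Type*} [NormedAddCommGroup E]
    [NormedSpace ℝ E] {f f' : ℝ → E} {a : ℝ} (hf' : LocallyIntegrable f' volume)
    (hf : ∀ t, a ≤ t → f t = f a + ∫ τ in a..t, f' τ) {s u : ℝ} (hs : a ≤ s) (hu : a ≤ u) :
    f u = f s + ∫ τ in s..u, f' τ := by
  rw [hf u hu, hf s hs, ← intervalIntegral.integral_interval_sub_left
    (hf'.intervalIntegrable a u) (hf'.intervalIntegrable a s)]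
  abel

namespace AbsolutelyContinuousOnInterval

variable {a b : ℝ}

theorem of_dist_le_mul {X Y : Type*} [PseudoMetricSpace X] [PseudoMetricSpace Y]
    {f : ℝ → X} {g : ℝ → Y} {K : ℝ} (hg : AbsolutelyContinuousOnInterval g a b)
    (h : ∀ u ∈ uIcc a b, ∀ v ∈ uIcc a b, dist (f u) (f v) ≤ K * dist (g u) (g v)) :
    AbsolutelyContinuousOnInterval f a b := by
  have hK : Tendsto (fun E : ℕ × (ℕ → ℝ × ℝ) =>
      K * ∑ i ∈ Finset.range E.1, dist (g (E.2 i).1) (g (E.2 i).2))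
      (totalLengthFilter ⊓ 𝓟 (disjWithin a b)) (𝓝 0) := by
    simpa using Tendsto.const_mul K hg
  refine squeeze_zero' (Eventually.of_forall fun E => Finset.sum_nonneg fun i _ => dist_nonneg)
    ?_ hK
  filter_upwards [eventually_inf_principal.mpr (Eventually.of_forall fun E hE => hE)]
    with E hE
  rw [Finset.mul_sum]
  exact Finset.sum_le_sum fun i hi => h _ (hE.1 i hi).1 _ (hE.1 i hi).2

theorem norm {E : Type*} [SeminormedAddCommGroup E] {f : ℝ → E}
    (hf : AbsolutelyContinuousOnInterval f a b) :
    AbsolutelyContinuousOnInterval (fun u => ‖f u‖) a b :=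
  hf.of_dist_le_mul (K := 1) fun u _ v _ => by
    rw [one_mul, dist_eq_norm (f u)]
    exact dist_norm_norm_le _ _

theorem _root_.ContDiff.comp_absolutelyContinuousOnInterval {E F : Type*}
    [NormedAddCommGroup E] [NormedSpace ℝ E] [ProperSpace E]
    [NormedAddCommGroup F] [NormedSpace ℝ F] {φ : E → F} (hφ : ContDiff ℝ 1 φ) {f : ℝ → E}
    (hf : AbsolutelyContinuousOnInterval f a b) :
    AbsolutelyContinuousOnInterval (fun u => φ (f u)) a b := by
  obtain ⟨C, hC⟩ := hf.exists_bound
  obtain ⟨K, hK⟩ := hφ.contDiffOn.exists_lipschitzOnWith one_ne_zero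
    (convex_closedBall (0 : E) C) (isCompact_closedBall 0 C)
  refine hf.of_dist_le_mul (K := K) fun u hu v hv => hK.dist_le_mul _ ?_ _ ?_
  · simpa using hC u hu
  · simpa using hC v hv

theorem of_eq_add_intervalIntegral {E : Type*} [NormedAddCommGroup E] [NormedSpace ℝ E]
    {z w : ℝ → E} (hw : IntervalIntegrable w volume a b)
    (hz : ∀ u ∈ uIcc a b, z u = z a + ∫ τ in a..u, w τ) :
    AbsolutelyContinuousOnInterval z a b := by
  refine (hw.norm.absolutelyContinuousOnInterval_intervalIntegral left_mem_uIcc).of_dist_le_mul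
    (K := 1) fun u hu v hv => ?_
  have hw' : ∀ c ∈ uIcc a b, IntervalIntegrable w volume a c := fun c hc =>
    hw.mono_set (uIcc_subset_uIcc_left hc)
  rw [one_mul, hz u hu, hz v hv, dist_add_left, dist_eq_norm, Real.dist_eq,
    intervalIntegral.integral_interval_sub_left (hw' u hu) (hw' v hv),
    intervalIntegral.integral_interval_sub_left (hw' u hu).norm (hw' v hv).norm]
  exact intervalIntegral.norm_integral_le_abs_integral_norm

theorem apply_le_of_ae_deriv_nonpos {f : ℝ → ℝ} (hab : a ≤ b)
    (hf : AbsolutelyContinuousOnInterval f a b) (hf' : ∀ᵐ x, x ∈ Ioo a b → deriv f x ≤ 0) :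
    f b ≤ f a := by
  have h : 0 ≤ ∫ x in a..b, -deriv f x := by
    refine intervalIntegral.integral_nonneg_of_ae_restrict hab ?_
    rw [← Measure.restrict_congr_set Ioo_ae_eq_Icc]
    exact (ae_restrict_iff' measurableSet_Ioo).mpr
      (hf'.mono fun x hx hxI => neg_nonneg.mpr (hx hxI))
  rw [intervalIntegral.integral_neg, hf.integral_deriv_eq_sub] at h
  linarith

end AbsolutelyContinuousOnInterval

section

variable {E : Type*} [NormedAddCommGroup E] [InnerProductSpace ℝ E]

theorem IsMonotoneOp.inner_add_mul_norm_sq_nonpos {A : E → Set E} (hA : IsMonotoneOp A)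
    {p q u v : E} {c : ℝ} (hp : -u - c • p ∈ A p) (hq : -v - c • q ∈ A q) :
    inner ℝ (u - v) (p - q) + c * ‖p - q‖ ^ 2 ≤ 0 := by
  have h := hA hp hq
  rw [show -u - c • p - (-v - c • q) = -((u - v) + c • (p - q)) by module, inner_neg_left,
    inner_add_left, real_inner_smul_left, real_inner_self_eq_norm_sq] at h
  linarith

theorem norm_le_exp_neg_integral_mul_norm [CompleteSpace E] {z w : ℝ → E} {ε : ℝ → ℝ}
    {s t : ℝ} (hst : s ≤ t) (hw : IntervalIntegrable w volume s t)
    (hε : IntervalIntegrable ε volume s t) (hz : ∀ u ∈ Icc s t, z u = z s + ∫ τ in s..u, w τ)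
    (hdiss : ∀ᵐ τ, τ ∈ Icc s t → inner ℝ (w τ) (z τ) + ε τ * ‖z τ‖ ^ 2 ≤ 0) :
    ‖z t‖ ≤ Real.exp (-∫ τ in s..t, ε τ) * ‖z s‖ := by
  set I : ℝ → ℝ := fun u => ∫ τ in s..u, ε τ
  set φ : ℝ → ℝ := fun u => Real.exp (2 * I u) * ‖z u‖ ^ 2 with hφ
  rw [← uIcc_of_le hst] at hz
  have hφ_ac : AbsolutelyContinuousOnInterval φ s t := by
    have hI_ac := hε.absolutelyContinuousOnInterval_intervalIntegral left_mem_uIcc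
    have hz_ac := AbsolutelyContinuousOnInterval.of_eq_add_intervalIntegral hw hz
    have hexp : ContDiff ℝ 1 fun r : ℝ => Real.exp (2 * r) :=
      Real.contDiff_exp.comp (contDiff_const.mul contDiff_id)
    exact (hexp.comp_absolutelyContinuousOnInterval hI_ac).fun_mul
      ((contDiff_id.pow 2).comp_absolutelyContinuousOnInterval hz_ac.norm)
  -- the integrating factor `exp (2 I)` turns the dissipation inequality into `φ' ≤ 0`
  have hφ' : ∀ᵐ τ, τ ∈ Ioo s t → deriv φ τ ≤ 0 := by
    filter_upwards [hε.ae_hasDerivAt_integral, hw.ae_hasDerivAt_integral, hdiss]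
      with τ hIτ hzτ hdτ hτ
    have hτ' : τ ∈ uIcc s t := uIcc_of_le hst ▸ Ioo_subset_Icc_self hτ
    have hz' : HasDerivAt z (w τ) τ := by
      refine ((hzτ hτ' s left_mem_uIcc).const_add (z s)).congr_of_eventuallyEq ?_
      filter_upwards [Icc_mem_nhds hτ.1 hτ.2] with u hu
      exact hz u (uIcc_of_le hst ▸ hu)
    have hderiv := (((hIτ hτ' s left_mem_uIcc).const_mul 2).exp).fun_mul hz'.norm_sq
    rw [hderiv.deriv, real_inner_comm]
    have := hdτ (Ioo_subset_Icc_self hτ)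
    have := Real.exp_pos (2 * I τ)
    nlinarith
  have hmono := hφ_ac.apply_le_of_ae_deriv_nonpos hst hφ'
  have hIs : I s = 0 := intervalIntegral.integral_same
  simp only [hφ, hIs, mul_zero, Real.exp_zero, one_mul] at hmono
  have hbound : Real.exp (I t) * ‖z t‖ ≤ ‖z s‖ := by
    refine (pow_le_pow_iff_left₀ (by positivity) (norm_nonneg _) two_ne_zero).mp ?_
    rw [mul_pow, ← Real.exp_nat_mul]
    push_cast
    exact hmono
  rw [Real.exp_neg, ← div_eq_inv_mul, le_div_iff₀ (Real.exp_pos _), mul_comm]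
  exact hbound

end

theorem stmt_13_general (d : ℕ) (A : EuclideanSpace ℝ (Fin d) → Set (EuclideanSpace ℝ (Fin d)))
    (hA : IsMaximalMonotoneOp A)
    (ε : ℝ → ℝ)
    (hεloc : LocallyIntegrable ε volume)
    (x y x' y' : ℝ → EuclideanSpace ℝ (Fin d))
    (hx'loc : LocallyIntegrable x' volume) (hy'loc : LocallyIntegrable y' volume)
    (hxac : ∀ t, 0 ≤ t → x t = x 0 + ∫ s in (0:ℝ)..t, x' s)
    (hyac : ∀ t, 0 ≤ t → y t = y 0 + ∫ s in (0:ℝ)..t, y' s)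
    (hxA : ∀ᵐ t ∂(volume.restrict (Set.Ici (0:ℝ))), -x' t - ε t • x t ∈ A (x t))
    (hyA : ∀ᵐ t ∂(volume.restrict (Set.Ici (0:ℝ))), -y' t - ε t • y t ∈ A (y t)) :
    ∀ s t, 0 ≤ s → s ≤ t →
      ‖x t - y t‖ ≤ Real.exp (-(∫ τ in s..t, ε τ)) * ‖x s - y s‖ := by
  intro s t hs hst
  have hzac : ∀ t, 0 ≤ t → (x - y) t = (x - y) 0 + ∫ τ in (0:ℝ)..t, (x' - y') τ := by
    intro t ht
    simp only [Pi.sub_apply]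
    rw [hxac t ht, hyac t ht, intervalIntegral.integral_sub (hx'loc.intervalIntegrable 0 t)
      (hy'loc.intervalIntegrable 0 t)]
    abel
  refine norm_le_exp_neg_integral_mul_norm (z := x - y) hst
    ((hx'loc.sub hy'loc).intervalIntegrable s t) (hεloc.intervalIntegrable s t)
    (fun u hu => eq_add_intervalIntegral_of_eq_add_intervalIntegral (hx'loc.sub hy'loc) hzac hs
      (hs.trans hu.1)) ?_
  filter_upwards [(ae_restrict_iff' measurableSet_Ici).mp hxA,
    (ae_restrict_iff' measurableSet_Ici).mp hyA] with τ hxτ hyτ hτ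
  exact hA.1.inner_add_mul_norm_sq_nonpos (hxτ (hs.trans hτ.1)) (hyτ (hs.trans hτ.1))

/-- contraction estimate for the Tikhonov-regularized flow
`x' ∈ -A(x) - ε(t)x`.  Absolutely continuous solutions are encoded via
locally integrable derivatives with the integral representation. -/
theorem stmt_13 (d : ℕ) (A : EuclideanSpace ℝ (Fin d) → Set (EuclideanSpace ℝ (Fin d)))
    (hA : IsMaximalMonotoneOp A)
    (ε : ℝ → ℝ) (hεmeas : Measurable ε) (hεnn : ∀ t, 0 ≤ t → 0 ≤ ε t)
    (hεloc : LocallyIntegrable ε volume)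
    (x y x' y' : ℝ → EuclideanSpace ℝ (Fin d))
    (hx'loc : LocallyIntegrable x' volume) (hy'loc : LocallyIntegrable y' volume)
    (hxac : ∀ t, 0 ≤ t → x t = x 0 + ∫ s in (0:ℝ)..t, x' s)
    (hyac : ∀ t, 0 ≤ t → y t = y 0 + ∫ s in (0:ℝ)..t, y' s)
    (hxA : ∀ᵐ t ∂(volume.restrict (Set.Ici (0:ℝ))), -x' t - ε t • x t ∈ A (x t))
    (hyA : ∀ᵐ t ∂(volume.restrict (Set.Ici (0:ℝ))), -y' t - ε t • y t ∈ A (y t)) :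
    ∀ s t, 0 ≤ s → s ≤ t →
      ‖x t - y t‖ ≤ Real.exp (-(∫ τ in s..t, ε τ)) * ‖x s - y s‖ :=
  stmt_13_general d A hA ε hεloc x y x' y' hx'loc hy'loc hxac hyac hxA hyA
end

section
/- Let φ : ℝ^d → ℝ ∪ {∞} be proper, convex, lower semicontinuous with argmin φ ≠ ∅, and suppose there exist p ≥ 1, γ > 0, and r > min φ such that φ(x) - min φ ≥ γ · d(x; argmin φ)^p for all x in the sublevel set {φ ≤ r}. For η > 0 let x_η be the unique minimizer of x ↦ φ(x) + (η/2)‖x‖², i.e. -η x_η ∈ ∂φ(x_η). Then there exist constants C* > 0 and η₀ > 0 such that ‖x_η - x*‖² ≤ C* η^{1/p} for all 0 < η ≤ η₀, where x* := proj_{argmin φ}(0). -/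
/-!
Testing the subgradient inequality `-η x_η ∈ ∂φ(x_η)` at `x*` gives
`φ(x_η) - min φ ≤ η ⟪x_η, x* - x_η⟫ ≤ η ‖x*‖² / 4`. In particular `⟪x_η, x* - x_η⟫ ≥ 0`, whence
`‖x_η - x*‖² ≤ ⟪x*, x* - x_η⟫`. As `x*` is the projection of `0` onto the convex set `argmin φ`,
the right-hand side is at most `‖x*‖ · d(x_η; argmin φ)`, and for small `η` the error bound turns
the value gap into `d(x_η; argmin φ) ≤ (‖x*‖² / (4γ))^{1/p} η^{1/p}`.
-/

open InnerProductSpace Metric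

section Minimizers

variable {E : Type*} [AddCommGroup E] [Module ℝ E]

theorem convex_setOf_forall_le {φ : E → EReal}
    (hconv : ∀ z w : E, ∀ a b : ℝ, 0 ≤ a → 0 ≤ b →
      a + b = 1 → φ (a • z + b • w) ≤ (a : EReal) * φ z + (b : EReal) * φ w) :
    Convex ℝ {z | ∀ w, φ z ≤ φ w} := by
  intro z hz w hw a b ha hb hab v
  have hzw : φ w = φ z := le_antisymm (hw z) (hz w)
  calc φ (a • z + b • w) ≤ (a : EReal) * φ z + (b : EReal) * φ w := hconv z w a b ha hb hab
    _ = φ z := by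
      rw [hzw, ← EReal.right_distrib_of_nonneg (by exact_mod_cast ha) (by exact_mod_cast hb),
        ← EReal.coe_add, hab, EReal.coe_one, one_mul]
    _ ≤ φ v := hz v

end Minimizers

section InnerProduct

variable {F : Type*} [NormedAddCommGroup F] [InnerProductSpace ℝ F]

theorem real_inner_sub_nonneg_of_forall_norm_le {K : Set F} (hK : Convex ℝ K) {y : F}
    (hy : y ∈ K) (hmin : ∀ z ∈ K, ‖y‖ ≤ ‖z‖) {s : F} (hs : s ∈ K) : 0 ≤ ⟪y, s - y⟫_ℝ := by
  have : Nonempty K := ⟨⟨y, hy⟩⟩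
  have hinf : ‖(0 : F) - y‖ = ⨅ z : K, ‖(0 : F) - z‖ := by
    simp only [zero_sub, norm_neg]
    exact le_antisymm (le_ciInf fun z => hmin z z.2)
      (ciInf_le (f := fun z : K => ‖(z : F)‖) ⟨0, by rintro _ ⟨z, rfl⟩; positivity⟩ ⟨y, hy⟩)
  have := (norm_eq_iInf_iff_real_inner_le_zero hK hy).1 hinf s hs
  rwa [zero_sub, inner_neg_left, neg_nonpos] at this

theorem real_inner_sub_le_norm_sq_div_four (x y : F) : ⟪x, y - x⟫_ℝ ≤ ‖y‖ ^ 2 / 4 := by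
  rw [inner_sub_right, real_inner_self_eq_norm_sq]
  nlinarith [real_inner_le_norm x y, sq_nonneg (‖x‖ - ‖y‖ / 2)]

theorem norm_sub_sq_le_real_inner_of_nonneg {x y : F} (h : 0 ≤ ⟪x, y - x⟫_ℝ) :
    ‖x - y‖ ^ 2 ≤ ⟪y, y - x⟫_ℝ := by
  have : ‖x - y‖ ^ 2 = ⟪y, y - x⟫_ℝ - ⟪x, y - x⟫_ℝ := by
    rw [norm_sub_rev, ← real_inner_self_eq_norm_sq, inner_sub_left]
  linarith

theorem real_inner_sub_le_norm_mul_infDist {S : Set F} {y : F} (hy : y ∈ S)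
    (hvi : ∀ s ∈ S, 0 ≤ ⟪y, s - y⟫_ℝ) (x : F) : ⟪y, y - x⟫_ℝ ≤ ‖y‖ * infDist x S := by
  have hle : ∀ s ∈ S, ⟪y, y - x⟫_ℝ ≤ ‖y‖ * dist x s := fun s hs => by
    have hsplit : ⟪y, s - x⟫_ℝ = ⟪y, s - y⟫_ℝ + ⟪y, y - x⟫_ℝ := by
      rw [← inner_add_right, sub_add_sub_cancel]
    have hcs := real_inner_le_norm y (s - x)
    rw [dist_comm, dist_eq_norm]
    linarith [hvi s hs]
  rcases (norm_nonneg y).eq_or_lt with hy0 | hy0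
  · rw [← hy0, norm_eq_zero.1 hy0.symm, inner_zero_left, zero_mul]
  · rw [← div_le_iff₀' hy0, le_infDist ⟨y, hy⟩]
    exact fun s hs => (div_le_iff₀' hy0).2 (hle s hs)

theorem le_add_mul_real_inner_of_subgradient_ineq {φ : F → EReal} {x y : F} {η : ℝ}
    (hx : φ x + ((⟪-(η • x), y - x⟫_ℝ : ℝ) : EReal) ≤ φ y) :
    φ x ≤ φ y + ((η * ⟪x, y - x⟫_ℝ : ℝ) : EReal) := by
  rw [inner_neg_left, real_inner_smul_left] at hx
  rwa [← neg_neg ((η * ⟪x, y - x⟫_ℝ : ℝ) : EReal), ← sub_eq_add_neg, ← EReal.coe_neg,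
    EReal.le_sub_iff_add_le (.inl (EReal.coe_ne_bot _)) (.inl (EReal.coe_ne_top _))]

end InnerProduct

theorem Real.le_mul_rpow_of_mul_rpow_le {p γ c η D : ℝ} (hp : 0 < p) (hγ : 0 < γ) (hc : 0 ≤ c)
    (hη : 0 ≤ η) (hD : 0 ≤ D) (h : γ * D ^ p ≤ c * η) : D ≤ (c / γ) ^ (1 / p) * η ^ (1 / p) := by
  rw [← Real.mul_rpow (by positivity) hη, one_div, Real.le_rpow_inv_iff_of_pos hD (by positivity) hp,
    div_mul_eq_mul_div, le_div_iff₀' hγ]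
  exact h

theorem stmt_14_general (d : ℕ) (φ : EuclideanSpace ℝ (Fin d) → EReal)
    (hproper : (∃ z, φ z ≠ ⊤) ∧ ∀ z, φ z ≠ ⊥)
    (hconv : ∀ z w : EuclideanSpace ℝ (Fin d), ∀ a b : ℝ, 0 ≤ a → 0 ≤ b →
      a + b = 1 → φ (a • z + b • w) ≤ (a : EReal) * φ z + (b : EReal) * φ w)
    (S : Set (EuclideanSpace ℝ (Fin d))) (hSdef : S = {z | ∀ w, φ z ≤ φ w})
    (xstar : EuclideanSpace ℝ (Fin d)) (hxstarS : xstar ∈ S)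
    (hxstarmin : ∀ z ∈ S, ‖xstar‖ ≤ ‖z‖)
    (p γ r : ℝ) (hp : 1 ≤ p) (hγ : 0 < γ) (hr : φ xstar < (r : EReal))
    (heb : ∀ z, φ z ≤ (r : EReal) →
      φ xstar + ((γ * Metric.infDist z S ^ p : ℝ) : EReal) ≤ φ z)
    (xc : ℝ → EuclideanSpace ℝ (Fin d))
    (hxc : ∀ η : ℝ, 0 < η → ∀ w,
      φ (xc η) + ((inner ℝ (-(η • xc η)) (w - xc η) : ℝ) : EReal) ≤ φ w) :
    ∃ C > 0, ∃ η₀ > 0, ∀ η : ℝ, 0 < η → η ≤ η₀ →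
      ‖xc η - xstar‖ ^ 2 ≤ C * η ^ (1 / p) := by
  obtain ⟨m, hm⟩ : ∃ m : ℝ, φ xstar = m :=
    ⟨_, (EReal.coe_toReal (hr.trans_le le_top).ne (hproper.2 xstar)).symm⟩
  have hmr : m < r := by exact_mod_cast hm ▸ hr
  have hmin : ∀ w, φ xstar ≤ φ w := by rw [hSdef] at hxstarS; exact hxstarS
  have hvi : ∀ s ∈ S, 0 ≤ ⟪xstar, s - xstar⟫_ℝ := fun s hs =>
    real_inner_sub_nonneg_of_forall_norm_le (hSdef ▸ convex_setOf_forall_le hconv) hxstarS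
      hxstarmin hs
  set B := ‖xstar‖
  set K := (B ^ 2 / 4 / γ) ^ (1 / p)
  refine ⟨B * K + 1, by positivity, (r - m) / (B ^ 2 + 1), div_pos (by linarith) (by positivity),
    fun η hη hηle => ?_⟩
  set x := xc η
  have hval := le_add_mul_real_inner_of_subgradient_ineq (hxc η hη xstar)
  rw [hm, ← EReal.coe_add] at hval
  have hgap : η * ⟪x, xstar - x⟫_ℝ ≤ B ^ 2 / 4 * η := by
    nlinarith [real_inner_sub_le_norm_sq_div_four x xstar]
  have hu : 0 ≤ ⟪x, xstar - x⟫_ℝ := by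
    have : (m : EReal) ≤ ((m + η * ⟪x, xstar - x⟫_ℝ : ℝ) : EReal) := hm ▸ (hmin x).trans hval
    exact nonneg_of_mul_nonneg_right (by linarith [EReal.coe_le_coe_iff.1 this]) hη
  have hxr : φ x ≤ r := by
    refine hval.trans (EReal.coe_le_coe_iff.2 ?_)
    have : B ^ 2 / 4 * η ≤ r - m := by
      rw [le_div_iff₀ (by positivity)] at hηle
      nlinarith
    linarith
  have hD : γ * infDist x S ^ p ≤ B ^ 2 / 4 * η := by
    have := (heb x hxr).trans hval
    rw [hm, ← EReal.coe_add, EReal.coe_le_coe_iff] at this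
    linarith
  calc ‖x - xstar‖ ^ 2 ≤ ⟪xstar, xstar - x⟫_ℝ := norm_sub_sq_le_real_inner_of_nonneg hu
    _ ≤ B * infDist x S := real_inner_sub_le_norm_mul_infDist hxstarS hvi x
    _ ≤ B * (K * η ^ (1 / p)) := mul_le_mul_of_nonneg_left
        (Real.le_mul_rpow_of_mul_rpow_le (by linarith) hγ (by positivity) hη.le
          infDist_nonneg hD) (norm_nonneg _)
    _ ≤ (B * K + 1) * η ^ (1 / p) := by nlinarith [Real.rpow_nonneg hη.le (1 / p)]

/-- under a Hölderian error bound on the solution set, the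
Tikhonov regularization path `x_η` (defined by `-η x_η ∈ ∂φ(x_η)`) converges to
the minimal-norm minimizer `x*` with rate `‖x_η - x*‖² ≤ C* η^{1/p}`. -/
theorem stmt_14 (d : ℕ) (φ : EuclideanSpace ℝ (Fin d) → EReal)
    (hproper : (∃ z, φ z ≠ ⊤) ∧ ∀ z, φ z ≠ ⊥)
    (hconv : ∀ z w : EuclideanSpace ℝ (Fin d), ∀ a b : ℝ, 0 ≤ a → 0 ≤ b →
      a + b = 1 → φ (a • z + b • w) ≤ (a : EReal) * φ z + (b : EReal) * φ w)
    (hlsc : LowerSemicontinuous φ)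
    (S : Set (EuclideanSpace ℝ (Fin d))) (hSdef : S = {z | ∀ w, φ z ≤ φ w})
    (hSne : S.Nonempty)
    (xstar : EuclideanSpace ℝ (Fin d)) (hxstarS : xstar ∈ S)
    (hxstarmin : ∀ z ∈ S, ‖xstar‖ ≤ ‖z‖)
    (p γ r : ℝ) (hp : 1 ≤ p) (hγ : 0 < γ) (hr : φ xstar < (r : EReal))
    (heb : ∀ z, φ z ≤ (r : EReal) →
      φ xstar + ((γ * Metric.infDist z S ^ p : ℝ) : EReal) ≤ φ z)
    (xc : ℝ → EuclideanSpace ℝ (Fin d))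
    (hxc : ∀ η : ℝ, 0 < η → ∀ w,
      φ (xc η) + ((inner ℝ (-(η • xc η)) (w - xc η) : ℝ) : EReal) ≤ φ w) :
    ∃ C > 0, ∃ η₀ > 0, ∀ η : ℝ, 0 < η → η ≤ η₀ →
      ‖xc η - xstar‖ ^ 2 ≤ C * η ^ (1 / p) :=
  stmt_14_general d φ hproper hconv S hSdef xstar hxstarS hxstarmin p γ r hp hγ hr heb xc hxc
end

section
/- Let A : ℝ^d ⇉ ℝ^d be maximal monotone with minimal-norm zero x* := proj_{A⁻¹(0)}(0), and for η > 0 define x_η by -η x_η ∈ A(x_η). Then the curve η ↦ x_η is locally Lipschitz on (0,∞), and for almost every η > 0, ‖(d/dη) x_η‖ ≤ ‖x*‖/η. -/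
open MeasureTheory

/-!
Monotonicity of `A`, tested against a zero `z` of `A`, gives `‖x_η‖² ≤ ⟪x_η, z⟫`, hence
`‖x_η‖ ≤ ‖z‖`. Tested between `x_η` and `x_μ` it gives
`η ‖x_η - x_μ‖² ≤ (μ - η) ⟪x_μ, x_η - x_μ⟫`, hence `η ‖x_η - x_μ‖ ≤ |μ - η| ‖z‖`.
The curve is therefore `‖z‖ / a`-Lipschitz on `(a, ∞)`, differentiable almost everywhere by
Rademacher's theorem, and the same inequality bounds its difference quotients at `η` by `‖z‖ / η`.
-/

open Set

section Monotone

variable {E : Type*} [NormedAddCommGroup E] [InnerProductSpace ℝ E] {A : E → Set E}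

theorem IsMonotoneOp.norm_le_of_neg_smul_mem (hA : IsMonotoneOp A) {η : ℝ} (hη : 0 < η)
    {x z : E} (hx : -(η • x) ∈ A x) (hz : 0 ∈ A z) : ‖x‖ ≤ ‖z‖ := by
  have hmono := hA hx hz
  rw [sub_zero, inner_neg_left, real_inner_smul_left, inner_sub_right,
    real_inner_self_eq_norm_sq] at hmono
  have hsq : ‖x‖ ^ 2 ≤ ‖x‖ * ‖z‖ :=
    (sub_nonpos.1 (nonpos_of_mul_nonpos_right (neg_nonneg.1 hmono) hη)).trans
      (real_inner_le_norm x z)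
  nlinarith [norm_nonneg x, norm_nonneg z]

theorem IsMonotoneOp.mul_norm_sub_le_of_neg_smul_mem (hA : IsMonotoneOp A) {η μ : ℝ}
    {x y : E} (hx : -(η • x) ∈ A x) (hy : -(μ • y) ∈ A y) :
    η * ‖x - y‖ ≤ |μ - η| * ‖y‖ := by
  have hmono := hA hx hy
  have hsplit : -(η • x) - -(μ • y) = (μ - η) • y - η • (x - y) := by module
  rw [hsplit, inner_sub_left, real_inner_smul_left, real_inner_smul_left,
    real_inner_self_eq_norm_sq] at hmono
  have hcs : (μ - η) * inner ℝ y (x - y) ≤ |μ - η| * (‖y‖ * ‖x - y‖) :=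
    (le_abs_self _).trans <| by
      rw [abs_mul]; exact mul_le_mul_of_nonneg_left (abs_real_inner_le_norm _ _) (abs_nonneg _)
  rcases (norm_nonneg (x - y)).eq_or_lt with hzero | hpos
  · rw [← hzero, mul_zero]; positivity
  · exact le_of_mul_le_mul_right (by nlinarith) hpos

end Monotone

section TikhonovCurve

variable {E : Type*} [NormedAddCommGroup E] [InnerProductSpace ℝ E] {A : E → Set E}
  {z : E} {xc : ℝ → E}

theorem mul_norm_sub_le_of_neg_smul_mem (hA : IsMonotoneOp A) (hz : 0 ∈ A z)
    (hxc : ∀ η : ℝ, 0 < η → -(η • xc η) ∈ A (xc η)) {η μ : ℝ} (hη : 0 < η) (hμ : 0 < μ) :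
    η * ‖xc η - xc μ‖ ≤ |μ - η| * ‖z‖ :=
  (hA.mul_norm_sub_le_of_neg_smul_mem (hxc η hη) (hxc μ hμ)).trans <|
    mul_le_mul_of_nonneg_left (hA.norm_le_of_neg_smul_mem hμ (hxc μ hμ) hz) (abs_nonneg _)

theorem lipschitzOnWith_Ioi_of_neg_smul_mem (hA : IsMonotoneOp A) (hz : 0 ∈ A z)
    (hxc : ∀ η : ℝ, 0 < η → -(η • xc η) ∈ A (xc η)) {a : ℝ} (ha : 0 < a) :
    LipschitzOnWith (‖z‖ / a).toNNReal xc (Ioi a) := by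
  refine LipschitzOnWith.of_dist_le' fun η hη μ hμ => ?_
  have hη' : a < η := hη
  have hbound := mul_norm_sub_le_of_neg_smul_mem hA hz hxc (ha.trans hη) (ha.trans hμ)
  rw [dist_eq_norm, Real.dist_eq, abs_sub_comm, div_mul_eq_mul_div, le_div_iff₀ ha]
  nlinarith [norm_nonneg (xc η - xc μ)]

theorem norm_le_div_of_hasDerivAt_of_neg_smul_mem (hA : IsMonotoneOp A) (hz : 0 ∈ A z)
    (hxc : ∀ η : ℝ, 0 < η → -(η • xc η) ∈ A (xc η)) {η : ℝ} (hη : 0 < η) {v : E}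
    (hv : HasDerivAt xc v η) : ‖v‖ ≤ ‖z‖ / η := by
  refine hv.le_of_lip' (by positivity) ?_
  filter_upwards [Ioi_mem_nhds hη] with t ht
  have hbound := mul_norm_sub_le_of_neg_smul_mem hA hz hxc hη ht
  rw [norm_sub_rev, div_mul_eq_mul_div, le_div_iff₀ hη, Real.norm_eq_abs]
  linarith

end TikhonovCurve

theorem ae_differentiableAt_of_forall_lipschitzOnWith_Ioi {F : Type*} [NormedAddCommGroup F]
    [NormedSpace ℝ F] [FiniteDimensional ℝ F] {f : ℝ → F}
    (hf : ∀ a : ℝ, 0 < a → ∃ C, LipschitzOnWith C f (Ioi a)) :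
    ∀ᵐ η ∂(volume.restrict (Ioi (0 : ℝ))), DifferentiableAt ℝ f η := by
  have hdiff : ∀ n : ℕ, ∀ᵐ η ∂(volume : Measure ℝ),
      η ∈ Ioi (1 / ((n : ℝ) + 1)) → DifferentiableAt ℝ f η := fun n => by
    obtain ⟨C, hC⟩ := hf _ Nat.one_div_pos_of_nat
    filter_upwards [hC.ae_differentiableWithinAt_of_mem] with η hη hmem
    exact (hη hmem).differentiableAt (isOpen_Ioi.mem_nhds hmem)
  rw [ae_restrict_iff' measurableSet_Ioi]
  filter_upwards [ae_all_iff.2 hdiff] with η hη hpos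
  obtain ⟨n, hn⟩ := exists_nat_one_div_lt (mem_Ioi.1 hpos)
  exact hη n hn

theorem stmt_15_general (d : ℕ) (A : EuclideanSpace ℝ (Fin d) → Set (EuclideanSpace ℝ (Fin d)))
    (hA : IsMaximalMonotoneOp A)
    (xstar : EuclideanSpace ℝ (Fin d))
    (hxstar : (0 : EuclideanSpace ℝ (Fin d)) ∈ A xstar)
    (xc : ℝ → EuclideanSpace ℝ (Fin d))
    (hxc : ∀ η : ℝ, 0 < η → -(η • xc η) ∈ A (xc η)) :
    (∀ η : ℝ, 0 < η → ∃ (L : NNReal) (ε : ℝ), 0 < ε ∧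
        LipschitzOnWith L xc (Metric.ball η ε ∩ Set.Ioi 0)) ∧
      ∀ᵐ η ∂(volume.restrict (Set.Ioi (0:ℝ))),
        ∃ v, HasDerivAt xc v η ∧ ‖v‖ ≤ ‖xstar‖ / η := by
  have hlip := fun a (ha : 0 < a) => lipschitzOnWith_Ioi_of_neg_smul_mem hA.1 hxstar hxc ha
  refine ⟨fun η hη => ⟨_, η / 2, half_pos hη, (hlip _ (half_pos hη)).mono ?_⟩, ?_⟩
  · rintro t ⟨hball, -⟩
    rw [Metric.mem_ball, Real.dist_eq, abs_lt] at hball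
    exact mem_Ioi.2 (by linarith)
  · filter_upwards [ae_differentiableAt_of_forall_lipschitzOnWith_Ioi fun a ha => ⟨_, hlip a ha⟩,
      ae_restrict_mem measurableSet_Ioi] with η hdiff hη
    exact ⟨_, hdiff.hasDerivAt,
      norm_le_div_of_hasDerivAt_of_neg_smul_mem hA.1 hxstar hxc hη hdiff.hasDerivAt⟩

/-- the Tikhonov curve `η ↦ x_η`, with `-η x_η ∈ A(x_η)`, is
locally Lipschitz on `(0,∞)`, and at almost every `η > 0` it is differentiable
with `‖(d/dη) x_η‖ ≤ ‖x*‖ / η`, `x*` being the minimal-norm zero of `A`. -/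
theorem stmt_15 (d : ℕ) (A : EuclideanSpace ℝ (Fin d) → Set (EuclideanSpace ℝ (Fin d)))
    (hA : IsMaximalMonotoneOp A)
    (xstar : EuclideanSpace ℝ (Fin d))
    (hxstar : (0 : EuclideanSpace ℝ (Fin d)) ∈ A xstar)
    (hxstarmin : ∀ z, (0 : EuclideanSpace ℝ (Fin d)) ∈ A z → ‖xstar‖ ≤ ‖z‖)
    (xc : ℝ → EuclideanSpace ℝ (Fin d))
    (hxc : ∀ η : ℝ, 0 < η → -(η • xc η) ∈ A (xc η)) :
    (∀ η : ℝ, 0 < η → ∃ (L : NNReal) (ε : ℝ), 0 < ε ∧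
        LipschitzOnWith L xc (Metric.ball η ε ∩ Set.Ioi 0)) ∧
      ∀ᵐ η ∂(volume.restrict (Set.Ioi (0:ℝ))),
        ∃ v, HasDerivAt xc v η ∧ ‖v‖ ≤ ‖xstar‖ / η :=
  stmt_15_general d A hA xstar hxstar xc hxc
end
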